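/- Let alpha' and alphaAbs' be the predicates defined by the same mutually recursive clauses as alpha and alphaAbs, except that the abstraction clause is replaced by: alphaAbs' (qAbs xs x X) (qAbs xs' x' X') iff xs = xs' and for ALL y ∉ {x,x'}, if qFresh xs y X and qFresh xs y X' then alpha' (X[y ∧ x]_xs) (X'[y ∧ x']_xs). Then alpha' coincides with alpha on good quasiterms and alphaAbs' coincides with alphaAbs on good quasiabstractions. -/

import Mathlib

open scoped Classical

universe u

section Binding

variable (var varsort index bindex opsym : Type u)

/-! ### Inputs -/

/-- An `(α,β)`-input: a partial function from `α` to `β`. -/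
abbrev Input (α β : Type u) : Type u := α → Option β

/-- The domain of an input. -/
def idom {α β : Type u} (inp : Input α β) : Set α := {a | inp a ≠ none}

/-- The componentwise lifting of a predicate to inputs. -/
def liftP {α β : Type u} (P : β → Prop) (inp : Input α β) : Prop :=
  ∀ a b, inp a = some b → P b

/-- The componentwise lifting of a function to inputs. -/
def liftF {α β γ : Type u} (f : β → γ) (inp : Input α β) : Input α γ :=
  fun a => (inp a).map f

/-- An input is small if its domain has cardinality smaller than that of `var`. -/
def smallDom {α β : Type u} (inp : Input α β) : Prop :=
  Cardinal.mk (idom inp) < Cardinal.mk var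

/-! ### Quasiterms -/

mutual
/-- Quasiterms: raw terms before quotienting by alpha-equivalence. -/
inductive QTerm : Type u where
  | qVar : varsort → var → QTerm
  | qOp : opsym → (index → Option QTerm) → (bindex → Option QAbs) → QTerm
/-- Quasiabstractions. -/
inductive QAbs : Type u where
  | qAbs : varsort → var → QTerm → QAbs
end

/-- Transposition of two variables. -/
noncomputable def swapVar (z1 z2 x : var) : var :=
  if x = z1 then z2 else if x = z2 then z1 else x

/-- Sort-aware transposition of variables (acts only on variables of varsort `zs`). -/
noncomputable def swapVarS (zs xs : varsort) (z1 z2 x : var) : var :=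
  if xs = zs then swapVar var z1 z2 x else x

variable {var varsort index bindex opsym}

/-- Swapping of the variables `z1`, `z2` at varsort `zs` in a quasiterm
(transposing them everywhere, including binding positions). -/
noncomputable def qSwap (z1 z2 : var) (zs : varsort) :
    QTerm var varsort index bindex opsym → QTerm var varsort index bindex opsym :=
  QTerm.rec (motive_1 := fun _ => QTerm var varsort index bindex opsym)
    (motive_2 := fun _ => QAbs var varsort index bindex opsym)
    (motive_3 := fun _ => Option (QTerm var varsort index bindex opsym))
    (motive_4 := fun _ => Option (QAbs var varsort index bindex opsym))
    (fun xs x => .qVar xs (swapVarS var varsort zs xs z1 z2 x))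
    (fun d _ _ rinp rbinp => .qOp d rinp rbinp)
    (fun xs x _ rX => .qAbs xs (swapVarS var varsort zs xs z1 z2 x) rX)
    none (fun _ r => some r) none (fun _ r => some r)

/-- Swapping of variables in a quasiabstraction. -/
noncomputable def qSwapAbs (z1 z2 : var) (zs : varsort) :
    QAbs var varsort index bindex opsym → QAbs var varsort index bindex opsym
  | .qAbs xs x X => .qAbs xs (swapVarS var varsort zs xs z1 z2 x) (qSwap z1 z2 zs X)

/-! ### Freshness and goodness -/

mutual
/-- `QFresh ys y X`: the variable `y` of varsort `ys` has no free occurrence in `X`. -/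
inductive QFresh : varsort → var → QTerm var varsort index bindex opsym → Prop where
  | qVar : ∀ {ys y xs x}, (ys, y) ≠ (xs, x) → QFresh ys y (.qVar xs x)
  | qOp : ∀ {ys y d inp binp}, (∀ i X, inp i = some X → QFresh ys y X) →
      (∀ j A, binp j = some A → QFreshAbs ys y A) → QFresh ys y (.qOp d inp binp)
/-- Freshness for quasiabstractions. -/
inductive QFreshAbs : varsort → var → QAbs var varsort index bindex opsym → Prop where
  | qAbs_bound : ∀ {xs x X}, QFreshAbs xs x (.qAbs xs x X)
  | qAbs_body : ∀ {ys y xs x X}, QFresh ys y X → QFreshAbs ys y (.qAbs xs x X)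
end

mutual
/-- Good quasiterms: all constructors branch less than `|var|`. -/
inductive QGood : QTerm var varsort index bindex opsym → Prop where
  | qVar : ∀ {xs x}, QGood (.qVar xs x)
  | qOp : ∀ {d inp binp}, (∀ i X, inp i = some X → QGood X) →
      (∀ j A, binp j = some A → QGoodAbs A) →
      smallDom var inp → smallDom var binp → QGood (.qOp d inp binp)
/-- Good quasiabstractions. -/
inductive QGoodAbs : QAbs var varsort index bindex opsym → Prop where
  | qAbs : ∀ {xs x X}, QGood X → QGoodAbs (.qAbs xs x X)
end

/-! ### Alpha-equivalence -/

mutual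
/-- Alpha-equivalence of quasiterms. -/
inductive Alpha : QTerm var varsort index bindex opsym →
    QTerm var varsort index bindex opsym → Prop where
  | qVar : ∀ {xs x}, Alpha (.qVar xs x) (.qVar xs x)
  | qOp : ∀ {d inp binp inp' binp'},
      (∀ i, inp i = none ↔ inp' i = none) →
      (∀ i X X', inp i = some X → inp' i = some X' → Alpha X X') →
      (∀ j, binp j = none ↔ binp' j = none) →
      (∀ j A A', binp j = some A → binp' j = some A' → AlphaAbs A A') →
      Alpha (.qOp d inp binp) (.qOp d inp' binp')
/-- Alpha-equivalence of quasiabstractions (the exists-fresh formulation). -/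
inductive AlphaAbs : QAbs var varsort index bindex opsym →
    QAbs var varsort index bindex opsym → Prop where
  | qAbs : ∀ {xs x x' X X' y}, y ∉ ({x, x'} : Set var) →
      QFresh xs y X → QFresh xs y X' →
      Alpha (qSwap y x xs X) (qSwap y x' xs X') →
      AlphaAbs (.qAbs xs x X) (.qAbs xs x' X')
end

/-! ### Terms and abstractions as quotients -/

variable (var varsort index bindex opsym)

/-- Terms: quasiterms modulo alpha-equivalence. -/
def Term : Type u := Quot (@Alpha var varsort index bindex opsym)

/-- Abstractions: quasiabstractions modulo alpha-equivalence. -/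
def Abstr : Type u := Quot (@AlphaAbs var varsort index bindex opsym)

variable {var varsort index bindex opsym}

/-- The projection from quasiterms to terms. -/
def tmk : QTerm var varsort index bindex opsym → Term var varsort index bindex opsym :=
  Quot.mk _

/-- The projection from quasiabstractions to abstractions. -/
def amk : QAbs var varsort index bindex opsym → Abstr var varsort index bindex opsym :=
  Quot.mk _

/-- A representative of a term. -/
noncomputable def trep (X : Term var varsort index bindex opsym) :
    QTerm var varsort index bindex opsym := Quot.out X

/-- A representative of an abstraction. -/
noncomputable def arep (A : Abstr var varsort index bindex opsym) :
    QAbs var varsort index bindex opsym := Quot.out A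

/-- Good terms. -/
def good (X : Term var varsort index bindex opsym) : Prop := QGood (trep X)

/-- Good abstractions. -/
def goodAbs (A : Abstr var varsort index bindex opsym) : Prop := QGoodAbs (arep A)

/-- The variable-injection constructor on terms. -/
def Var (xs : varsort) (x : var) : Term var varsort index bindex opsym :=
  tmk (.qVar xs x)

/-- The operation constructor on terms. -/
noncomputable def Op (d : opsym) (inp : Input index (Term var varsort index bindex opsym))
    (binp : Input bindex (Abstr var varsort index bindex opsym)) :
    Term var varsort index bindex opsym :=
  tmk (.qOp d (liftF trep inp) (liftF arep binp))

/-- The abstraction constructor. -/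
noncomputable def Abs (xs : varsort) (x : var) (X : Term var varsort index bindex opsym) :
    Abstr var varsort index bindex opsym :=
  amk (.qAbs xs x (trep X))

/-- Freshness on terms. -/
def fresh (ys : varsort) (y : var) (X : Term var varsort index bindex opsym) : Prop :=
  QFresh ys y (trep X)

/-- Freshness on abstractions. -/
def freshAbs (ys : varsort) (y : var) (A : Abstr var varsort index bindex opsym) : Prop :=
  QFreshAbs ys y (arep A)

/-- Swapping on terms. -/
noncomputable def tswap (X : Term var varsort index bindex opsym)
    (z1 z2 : var) (zs : varsort) : Term var varsort index bindex opsym :=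
  tmk (qSwap z1 z2 zs (trep X))

/-! ### Substitution -/

mutual
/-- The graph of capture-avoiding substitution on quasiterms:
`QSubst X Y y ys Z` means that `Z` is a result of substituting `Y` for the free
occurrences of the variable `y` of varsort `ys` in `X` (along a capture-free
representative). -/
inductive QSubst : QTerm var varsort index bindex opsym →
    QTerm var varsort index bindex opsym → var → varsort →
    QTerm var varsort index bindex opsym → Prop where
  | var_eq : ∀ {Y y ys}, QSubst (.qVar ys y) Y y ys Y
  | var_ne : ∀ {Y y ys xs x}, (xs, x) ≠ (ys, y) → QSubst (.qVar xs x) Y y ys (.qVar xs x)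
  | op : ∀ {Y y ys d inp binp inp' binp'},
      (∀ i, inp i = none ↔ inp' i = none) →
      (∀ i X X', inp i = some X → inp' i = some X' → QSubst X Y y ys X') →
      (∀ j, binp j = none ↔ binp' j = none) →
      (∀ j A A', binp j = some A → binp' j = some A' → QSubstAbs A Y y ys A') →
      QSubst (.qOp d inp binp) Y y ys (.qOp d inp' binp')
/-- The graph of capture-avoiding substitution on quasiabstractions. -/
inductive QSubstAbs : QAbs var varsort index bindex opsym →
    QTerm var varsort index bindex opsym → var → varsort →
    QAbs var varsort index bindex opsym → Prop where
  | abs : ∀ {Y y ys xs x X X'}, (xs, x) ≠ (ys, y) → QFresh xs x Y →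
      QSubst X Y y ys X' → QSubstAbs (.qAbs xs x X) Y y ys (.qAbs xs x X')
end

/-- The graph of capture-avoiding substitution on terms. -/
def SubstRel (X Y : Term var varsort index bindex opsym) (y : var) (ys : varsort)
    (Z : Term var varsort index bindex opsym) : Prop :=
  ∃ qX qZ, tmk qX = X ∧ tmk qZ = Z ∧ QSubst qX (trep Y) y ys qZ

/-- Capture-avoiding substitution on terms: `subst X Y y ys` is `X[Y/y]_ys`. -/
noncomputable def subst (X Y : Term var varsort index bindex opsym)
    (y : var) (ys : varsort) : Term var varsort index bindex opsym :=
  if h : ∃ Z, SubstRel X Y y ys Z then h.choose else X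

/-- The graph of capture-avoiding substitution on abstractions. -/
def SubstAbsRel (A : Abstr var varsort index bindex opsym)
    (Y : Term var varsort index bindex opsym) (y : var) (ys : varsort)
    (B : Abstr var varsort index bindex opsym) : Prop :=
  ∃ qA qB, amk qA = A ∧ amk qB = B ∧ QSubstAbs qA (trep Y) y ys qB

/-- Capture-avoiding substitution on abstractions: `substAbs A Y y ys` is `A[Y/y]_ys`. -/
noncomputable def substAbs (A : Abstr var varsort index bindex opsym)
    (Y : Term var varsort index bindex opsym) (y : var) (ys : varsort) :
    Abstr var varsort index bindex opsym :=
  if h : ∃ B, SubstAbsRel A Y y ys B then h.choose else A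

/-! ### Parallel substitution -/

mutual
/-- The graph of capture-avoiding parallel substitution on quasiterms, along an
assignment `ρ : varsort → var → Option qterm`. -/
inductive QPSubst : QTerm var varsort index bindex opsym →
    (varsort → var → Option (QTerm var varsort index bindex opsym)) →
    QTerm var varsort index bindex opsym → Prop where
  | var_some : ∀ {ρ xs x Y}, ρ xs x = some Y → QPSubst (.qVar xs x) ρ Y
  | var_none : ∀ {ρ xs x}, ρ xs x = none → QPSubst (.qVar xs x) ρ (.qVar xs x)
  | op : ∀ {ρ d inp binp inp' binp'},
      (∀ i, inp i = none ↔ inp' i = none) →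
      (∀ i X X', inp i = some X → inp' i = some X' → QPSubst X ρ X') →
      (∀ j, binp j = none ↔ binp' j = none) →
      (∀ j A A', binp j = some A → binp' j = some A' → QPSubstAbs A ρ A') →
      QPSubst (.qOp d inp binp) ρ (.qOp d inp' binp')
/-- The graph of capture-avoiding parallel substitution on quasiabstractions. -/
inductive QPSubstAbs : QAbs var varsort index bindex opsym →
    (varsort → var → Option (QTerm var varsort index bindex opsym)) →
    QAbs var varsort index bindex opsym → Prop where
  | abs : ∀ {ρ xs x X X'}, ρ xs x = none →
      (∀ ys y Y, ρ ys y = some Y → QFresh xs x Y) →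
      QPSubst X ρ X' → QPSubstAbs (.qAbs xs x X) ρ (.qAbs xs x X')
end

/-- Turning a term-valued assignment into a quasiterm-valued one, by picking
representatives. -/
noncomputable def qassign (ρ : varsort → var → Option (Term var varsort index bindex opsym)) :
    varsort → var → Option (QTerm var varsort index bindex opsym) :=
  fun xs x => (ρ xs x).map trep

/-- The graph of parallel substitution on terms. -/
def PSubstRel (X : Term var varsort index bindex opsym)
    (ρ : varsort → var → Option (Term var varsort index bindex opsym))
    (Z : Term var varsort index bindex opsym) : Prop :=
  ∃ qX qZ, tmk qX = X ∧ tmk qZ = Z ∧ QPSubst qX (qassign ρ) qZ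

/-- Capture-avoiding parallel substitution on terms: `psubst X ρ` is `X[ρ]`. -/
noncomputable def psubst (X : Term var varsort index bindex opsym)
    (ρ : varsort → var → Option (Term var varsort index bindex opsym)) :
    Term var varsort index bindex opsym :=
  if h : ∃ Z, PSubstRel X ρ Z then h.choose else X

/-- The graph of parallel substitution on abstractions. -/
def PSubstAbsRel (A : Abstr var varsort index bindex opsym)
    (ρ : varsort → var → Option (Term var varsort index bindex opsym))
    (B : Abstr var varsort index bindex opsym) : Prop :=
  ∃ qA qB, amk qA = A ∧ amk qB = B ∧ QPSubstAbs qA (qassign ρ) qB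

/-- Capture-avoiding parallel substitution on abstractions. -/
noncomputable def psubstAbs (A : Abstr var varsort index bindex opsym)
    (ρ : varsort → var → Option (Term var varsort index bindex opsym)) :
    Abstr var varsort index bindex opsym :=
  if h : ∃ B, PSubstAbsRel A ρ B then h.choose else A

mutual
/-- The variant of alpha-equivalence with the forall-fresh clause on abstractions. -/
inductive Alpha' : QTerm var varsort index bindex opsym → QTerm var varsort index bindex opsym → Prop where
  | qVar : ∀ {xs x}, Alpha' (.qVar xs x) (.qVar xs x)
  | qOp : ∀ {d inp binp inp' binp'},
      (∀ i, inp i = none ↔ inp' i = none) →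
      (∀ i X X', inp i = some X → inp' i = some X' → Alpha' X X') →
      (∀ j, binp j = none ↔ binp' j = none) →
      (∀ j A A', binp j = some A → binp' j = some A' → AlphaAbs' A A') →
      Alpha' (.qOp d inp binp) (.qOp d inp' binp')
/-- The forall-fresh alpha-equivalence of quasiabstractions. -/
inductive AlphaAbs' : QAbs var varsort index bindex opsym → QAbs var varsort index bindex opsym → Prop where
  | qAbs : ∀ {xs x x' X X'},
      (∀ y, y ∉ ({x, x'} : Set var) → QFresh xs y X → QFresh xs y X' →
        Alpha' (qSwap y x xs X) (qSwap y x' xs X')) →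
      AlphaAbs' (.qAbs xs x X) (.qAbs xs x' X')
end

/-!
Regularity of `|var|` makes the non-fresh variables of a good quasiterm a small set, so fresh
variables always exist; this gives `Alpha' → Alpha`. Conversely, `AlphaAbs` relates the bodies at
one fresh witness `y`, and they must be related at every fresh `z`. Swapping with `z ∧ y` moves
the witness, and the extra swap is harmless because swapping two variables fresh in a good
quasiterm yields an alpha-equivalent one; chaining these steps needs transitivity of `Alpha` on
good quasiterms, whose abstraction case needs the same change of witness. Both go by induction
on an ordinal-valued depth, which swapping preserves.
-/

theorem exists_eq_some_of_none_iff {α β γ : Type*} {f : α → Option β} {g : α → Option γ}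
    (h : ∀ a, f a = none ↔ g a = none) {a : α} {b : β} (hb : f a = some b) :
    ∃ c, g a = some c :=
  Option.ne_none_iff_exists'.1 fun hg => by simp [(h a).2 hg] at hb

theorem swapVar_left (z1 z2 : var) : swapVar var z1 z2 z1 = z2 := if_pos rfl

theorem swapVar_conj (z1 z2 y x v : var) :
    swapVar var z1 z2 (swapVar var y x v)
      = swapVar var (swapVar var z1 z2 y) (swapVar var z1 z2 x) (swapVar var z1 z2 v) := by
  unfold swapVar; split_ifs <;> simp_all

theorem swapVar_swapVar_of_ne {z y x : var} (hzy : z ≠ y) (hzx : z ≠ x) (hyx : y ≠ x)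
    (v : var) :
    swapVar var z y (swapVar var y x v) = swapVar var z x (swapVar var z y v) := by
  unfold swapVar; split_ifs <;> simp_all

theorem swapVarS_self (zs : varsort) (z1 z2 x : var) :
    swapVarS var varsort zs zs z1 z2 x = swapVar var z1 z2 x := if_pos rfl

theorem swapVarS_swapVarS (zs xs : varsort) (z1 z2 x : var) :
    swapVarS var varsort zs xs z1 z2 (swapVarS var varsort zs xs z1 z2 x) = x := by
  unfold swapVarS swapVar; split_ifs <;> simp_all

theorem swapVarS_injective (zs xs : varsort) (z1 z2 : var) :
    Function.Injective (swapVarS var varsort zs xs z1 z2) :=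
  Function.LeftInverse.injective (swapVarS_swapVarS zs xs z1 z2)

theorem swapVarS_of_ne {zs ys : varsort} {z1 z2 y : var}
    (h1 : (ys, y) ≠ (zs, z1)) (h2 : (ys, y) ≠ (zs, z2)) :
    swapVarS var varsort zs ys z1 z2 y = y := by
  simp only [ne_eq, Prod.mk.injEq, not_and] at h1 h2
  unfold swapVarS swapVar; split_ifs <;> simp_all

theorem swapVarS_conj (zs xs us : varsort) (z1 z2 y x w : var) :
    swapVarS var varsort xs us (swapVarS var varsort zs xs z1 z2 y)
        (swapVarS var varsort zs xs z1 z2 x) (swapVarS var varsort zs us z1 z2 w)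
      = swapVarS var varsort zs us z1 z2 (swapVarS var varsort xs us y x w) := by
  unfold swapVarS
  split_ifs <;> first | rfl | exact (swapVar_conj _ _ _ _ _).symm | simp_all

@[simp]
theorem qSwap_qVar (z1 z2 : var) (zs xs : varsort) (x : var) :
    qSwap z1 z2 zs (QTerm.qVar xs x : QTerm var varsort index bindex opsym)
      = .qVar xs (swapVarS var varsort zs xs z1 z2 x) := rfl

@[simp]
theorem qSwap_qOp (z1 z2 : var) (zs : varsort) (d : opsym)
    (inp : Input index (QTerm var varsort index bindex opsym))
    (binp : Input bindex (QAbs var varsort index bindex opsym)) :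
    qSwap z1 z2 zs (QTerm.qOp d inp binp)
      = .qOp d (fun i => (inp i).map (qSwap z1 z2 zs))
          (fun j => (binp j).map (qSwapAbs z1 z2 zs)) := by
  show QTerm.qOp _ _ _ = _
  congr 1
  · funext i; cases inp i <;> rfl
  · funext j
    rcases binp j with _ | A
    · rfl
    · cases A; rfl

@[simp]
theorem qSwapAbs_qAbs (z1 z2 : var) (zs xs : varsort) (x : var)
    (X : QTerm var varsort index bindex opsym) :
    qSwapAbs z1 z2 zs (QAbs.qAbs xs x X)
      = .qAbs xs (swapVarS var varsort zs xs z1 z2 x) (qSwap z1 z2 zs X) := rfl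

theorem qterm_mutual_induction {P : QTerm var varsort index bindex opsym → Prop}
    {Q : QAbs var varsort index bindex opsym → Prop}
    (hvar : ∀ xs x, P (.qVar xs x))
    (hop : ∀ d inp binp, (∀ i X, inp i = some X → P X) →
      (∀ j A, binp j = some A → Q A) → P (.qOp d inp binp))
    (habs : ∀ xs x X, P X → Q (.qAbs xs x X)) :
    (∀ X, P X) ∧ (∀ A, Q A) := by
  have hnone : ∀ X, (none : Option (QTerm var varsort index bindex opsym)) = some X → P X := by
    simp
  have hnone' : ∀ A, (none : Option (QAbs var varsort index bindex opsym)) = some A → Q A := by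
    simp
  have hsome : ∀ X, P X → ∀ Y, some X = some Y → P Y := by rintro X hX _ ⟨⟩; exact hX
  have hsome' : ∀ A, Q A → ∀ B, some A = some B → Q B := by rintro A hA _ ⟨⟩; exact hA
  exact ⟨fun X => QTerm.rec (motive_3 := fun o => ∀ X, o = some X → P X)
      (motive_4 := fun o => ∀ A, o = some A → Q A) hvar hop habs hnone hsome hnone' hsome' X,
    fun A => QAbs.rec (motive_3 := fun o => ∀ X, o = some X → P X)
      (motive_4 := fun o => ∀ A, o = some A → Q A) hvar hop habs hnone hsome hnone' hsome' A⟩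

theorem qSwap_qSwap_congr {z1 z2 z1' z2' w1 w2 w1' w2' : var} {zs zs' ws ws' : varsort}
    (h : ∀ (us : varsort) (w : var),
      swapVarS var varsort zs us z1 z2 (swapVarS var varsort ws us w1 w2 w)
        = swapVarS var varsort zs' us z1' z2' (swapVarS var varsort ws' us w1' w2' w)) :
    (∀ X : QTerm var varsort index bindex opsym,
      qSwap z1 z2 zs (qSwap w1 w2 ws X) = qSwap z1' z2' zs' (qSwap w1' w2' ws' X)) ∧
    (∀ A : QAbs var varsort index bindex opsym,
      qSwapAbs z1 z2 zs (qSwapAbs w1 w2 ws A) = qSwapAbs z1' z2' zs' (qSwapAbs w1' w2' ws' A)) := by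
  apply qterm_mutual_induction
  · intro xs x; simp only [qSwap_qVar, h]
  · intro d inp binp h1 h2
    simp only [qSwap_qOp, QTerm.qOp.injEq, true_and]
    constructor
    · funext i; rcases hi : inp i with _ | X
      · rfl
      · simp [h1 i X hi]
    · funext j; rcases hj : binp j with _ | A
      · rfl
      · simp [h2 j A hj]
  · intro xs x X hX
    simp only [qSwapAbs_qAbs, hX, h]

theorem qSwap_qSwap_of_ne {z y x : var} (xs : varsort) (hzy : z ≠ y) (hzx : z ≠ x)
    (hyx : y ≠ x) (X : QTerm var varsort index bindex opsym) :
    qSwap z y xs (qSwap y x xs X) = qSwap z x xs (qSwap z y xs X) := by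
  refine (qSwap_qSwap_congr fun us w => ?_).1 X
  unfold swapVarS
  split_ifs
  · exact swapVar_swapVar_of_ne hzy hzx hyx w
  · rfl

theorem qSwap_qSwap_conj (z1 z2 y x : var) (zs xs : varsort)
    (X : QTerm var varsort index bindex opsym) :
    qSwap (swapVarS var varsort zs xs z1 z2 y) (swapVarS var varsort zs xs z1 z2 x) xs
        (qSwap z1 z2 zs X) = qSwap z1 z2 zs (qSwap y x xs X) :=
  (qSwap_qSwap_congr fun us w => swapVarS_conj zs xs us z1 z2 y x w).1 X

theorem qFresh_qSwap {z1 z2 : var} {zs ys : varsort} {y : var} :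
    (∀ X : QTerm var varsort index bindex opsym, QFresh ys y X →
      QFresh ys (swapVarS var varsort zs ys z1 z2 y) (qSwap z1 z2 zs X)) ∧
    (∀ A : QAbs var varsort index bindex opsym, QFreshAbs ys y A →
      QFreshAbs ys (swapVarS var varsort zs ys z1 z2 y) (qSwapAbs z1 z2 zs A)) := by
  apply qterm_mutual_induction
  · rintro xs x ⟨hne⟩
    refine QFresh.qVar fun heq => hne ?_
    obtain ⟨rfl, hx⟩ := Prod.mk.inj heq
    rw [swapVarS_injective _ _ _ _ hx]
  · intro d inp binp ih1 ih2 h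
    cases h with | qOp hinp hbinp =>
    rw [qSwap_qOp]
    refine QFresh.qOp ?_ ?_
    · intro i Y hY
      obtain ⟨X, hX, rfl⟩ := Option.map_eq_some_iff.1 hY
      exact ih1 i X hX (hinp i X hX)
    · intro j B hB
      obtain ⟨A, hA, rfl⟩ := Option.map_eq_some_iff.1 hB
      exact ih2 j A hA (hbinp j A hA)
  · rintro xs x X ih (_ | ⟨hX⟩)
    · exact QFreshAbs.qAbs_bound
    · exact QFreshAbs.qAbs_body (ih hX)

theorem qFresh_qSwap_left {xs : varsort} {y x : var} {X : QTerm var varsort index bindex opsym}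
    (h : QFresh xs y X) : QFresh xs x (qSwap y x xs X) := by
  simpa only [swapVarS_self, swapVar_left] using
    (qFresh_qSwap (z1 := y) (z2 := x) (zs := xs)).1 X h

theorem qFresh_qSwap_of_qFreshAbs {zs xs : varsort} {z y x : var}
    {X : QTerm var varsort index bindex opsym} (hz : QFreshAbs zs z (.qAbs xs x X))
    (hzy : z ≠ y) (hy : QFresh xs y X) : QFresh zs z (qSwap y x xs X) := by
  by_cases hbound : (zs, z) = (xs, x)
  · obtain ⟨rfl, rfl⟩ := Prod.mk.inj hbound
    exact qFresh_qSwap_left hy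
  · rcases hz with _ | hz
    · exact absurd rfl hbound
    · have := qFresh_qSwap (z1 := y) (z2 := x) (zs := xs).1 X hz
      rwa [swapVarS_of_ne (fun h => hzy (Prod.mk.inj h).2) hbound] at this

noncomputable def qdepth : QTerm var varsort index bindex opsym → Ordinal.{u} :=
  QTerm.rec (motive_1 := fun _ => Ordinal.{u}) (motive_2 := fun _ => Ordinal.{u})
    (motive_3 := fun _ => Ordinal.{u}) (motive_4 := fun _ => Ordinal.{u})
    (fun _ _ => 0)
    (fun _ _ _ r rb => max (⨆ i, r i) (⨆ j, rb j) + 1)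
    (fun _ _ _ r => r) 0 (fun _ r => r) 0 (fun _ r => r)

noncomputable def qdepthAbs : QAbs var varsort index bindex opsym → Ordinal.{u}
  | .qAbs _ _ X => qdepth X

theorem qdepth_qOp (d : opsym) (inp : Input index (QTerm var varsort index bindex opsym))
    (binp : Input bindex (QAbs var varsort index bindex opsym)) :
    qdepth (QTerm.qOp d inp binp)
      = max (⨆ i, (inp i).elim 0 qdepth) (⨆ j, (binp j).elim 0 qdepthAbs) + 1 := by
  show max _ _ + 1 = _
  congr 2
  · refine iSup_congr fun i => ?_
    cases inp i <;> rfl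
  · refine iSup_congr fun j => ?_
    rcases binp j with _ | A
    · rfl
    · cases A; rfl

theorem qdepth_lt_of_inp {d : opsym} {inp : Input index (QTerm var varsort index bindex opsym)}
    {binp : Input bindex (QAbs var varsort index bindex opsym)} {i : index}
    {X : QTerm var varsort index bindex opsym} (h : inp i = some X) :
    qdepth X < qdepth (QTerm.qOp d inp binp) := by
  rw [qdepth_qOp, Order.lt_add_one_iff]
  refine le_trans ?_ (le_max_left _ _)
  simpa [h] using Ordinal.le_iSup (fun i => (inp i).elim 0 qdepth) i

theorem qdepthAbs_lt_of_binp {d : opsym} {inp : Input index (QTerm var varsort index bindex opsym)}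
    {binp : Input bindex (QAbs var varsort index bindex opsym)} {j : bindex}
    {A : QAbs var varsort index bindex opsym} (h : binp j = some A) :
    qdepthAbs A < qdepth (QTerm.qOp d inp binp) := by
  rw [qdepth_qOp, Order.lt_add_one_iff]
  refine le_trans ?_ (le_max_right _ _)
  simpa [h] using Ordinal.le_iSup (fun j => (binp j).elim 0 qdepthAbs) j

theorem qdepth_induction {P : QTerm var varsort index bindex opsym → Prop}
    (X : QTerm var varsort index bindex opsym)
    (h : ∀ X, (∀ Y, qdepth Y < qdepth X → P Y) → P X) : P X :=
  (InvImage.wf qdepth Ordinal.lt_wf).induction X h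

theorem qdepth_qSwap (z1 z2 : var) (zs : varsort) :
    (∀ X : QTerm var varsort index bindex opsym, qdepth (qSwap z1 z2 zs X) = qdepth X) ∧
    (∀ A : QAbs var varsort index bindex opsym,
      qdepthAbs (qSwapAbs z1 z2 zs A) = qdepthAbs A) := by
  apply qterm_mutual_induction
  · intro xs x; rfl
  · intro d inp binp h1 h2
    rw [qSwap_qOp, qdepth_qOp, qdepth_qOp]
    congr 2
    · refine iSup_congr fun i => ?_
      rcases h : inp i with _ | X
      · rfl
      · simp [h1 i X h]
    · refine iSup_congr fun j => ?_
      rcases h : binp j with _ | A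
      · rfl
      · simp [h2 j A h]
  · intro xs x X hX
    exact hX

theorem smallDom_map {α β γ : Type u} {inp : Input α β} (f : β → γ)
    (h : smallDom var inp) : smallDom var (fun a => (inp a).map f) := by
  have : idom (fun a => (inp a).map f) = idom inp := by
    ext a; simp [idom]
  rwa [smallDom, this]

theorem qGood_qSwap (z1 z2 : var) (zs : varsort) :
    (∀ X : QTerm var varsort index bindex opsym, QGood X → QGood (qSwap z1 z2 zs X)) ∧
    (∀ A : QAbs var varsort index bindex opsym,
      QGoodAbs A → QGoodAbs (qSwapAbs z1 z2 zs A)) := by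
  apply qterm_mutual_induction
  · intro xs x _; exact QGood.qVar
  · rintro d inp binp ih1 ih2 (_ | ⟨hinp, hbinp, hsmall, hbsmall⟩)
    rw [qSwap_qOp]
    refine QGood.qOp ?_ ?_ (smallDom_map _ hsmall) (smallDom_map _ hbsmall)
    · intro i Y hY
      obtain ⟨X, hX, rfl⟩ := Option.map_eq_some_iff.1 hY
      exact ih1 i X hX (hinp i X hX)
    · intro j B hB
      obtain ⟨A, hA, rfl⟩ := Option.map_eq_some_iff.1 hB
      exact ih2 j A hA (hbinp j A hA)
  · rintro xs x X ih ⟨hX⟩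
    exact QGoodAbs.qAbs (ih hX)

def qSupp (X : QTerm var varsort index bindex opsym) : Set var := {y | ∃ ys, ¬ QFresh ys y X}

def qSuppAbs (A : QAbs var varsort index bindex opsym) : Set var :=
  {y | ∃ ys, ¬ QFreshAbs ys y A}

theorem mk_iUnion_input_lt (hreg : (Cardinal.mk var).IsRegular) {α β : Type u}
    {inp : Input α β} (hinp : smallDom var inp) {S : β → Set var}
    (hS : ∀ a b, inp a = some b → Cardinal.mk (S b) < Cardinal.mk var) :
    Cardinal.mk (⋃ a, ⋃ b ∈ inp a, S b : Set var) < Cardinal.mk var := by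
  have hdom :
      (⋃ a, ⋃ b ∈ inp a, S b : Set var) = ⋃ a ∈ idom inp, ⋃ b ∈ inp a, S b := by
    ext y
    simp only [Set.mem_iUnion, idom, Set.mem_ofPred_eq, Option.mem_def, exists_prop]
    exact ⟨fun ⟨a, b, hb, hy⟩ => ⟨a, by simp [hb], b, hb, hy⟩,
      fun ⟨a, _, b, hb, hy⟩ => ⟨a, b, hb, hy⟩⟩
  rw [hdom, Cardinal.card_biUnion_lt_iff_forall_of_isRegular hreg hinp]
  intro a _
  rcases h : inp a with _ | b
  · simpa using hreg.aleph0_le.trans_lt' Cardinal.aleph0_pos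
  · simpa using hS a b h

theorem mk_qSupp_lt (hreg : (Cardinal.mk var).IsRegular) :
    (∀ X : QTerm var varsort index bindex opsym, QGood X →
      Cardinal.mk (qSupp X) < Cardinal.mk var) ∧
    (∀ A : QAbs var varsort index bindex opsym, QGoodAbs A →
      Cardinal.mk (qSuppAbs A) < Cardinal.mk var) := by
  apply qterm_mutual_induction
  · intro xs x _
    have hsub : qSupp (.qVar xs x : QTerm var varsort index bindex opsym) ⊆ {x} := by
      rintro y ⟨ys, hy⟩
      by_contra hyx
      exact hy (QFresh.qVar fun h => hyx (Prod.mk.inj h).2)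
    exact (Cardinal.mk_le_mk_of_subset hsub).trans_lt
      (by simpa using Cardinal.one_lt_aleph0.trans_le hreg.aleph0_le)
  · rintro d inp binp ih1 ih2 (_ | ⟨hinp, hbinp, hsmall, hbsmall⟩)
    have hsub : qSupp (.qOp d inp binp) ⊆
        (⋃ i, ⋃ X ∈ inp i, qSupp X) ∪ ⋃ j, ⋃ A ∈ binp j, qSuppAbs A := by
      rintro y ⟨ys, hy⟩
      by_contra hout
      simp only [Set.mem_union, Set.mem_iUnion, Option.mem_def, not_or, not_exists] at hout
      refine hy (QFresh.qOp (fun i X hX => ?_) (fun j A hA => ?_))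
      · by_contra h; exact hout.1 i X hX ⟨ys, h⟩
      · by_contra h; exact hout.2 j A hA ⟨ys, h⟩
    refine (Cardinal.mk_le_mk_of_subset hsub).trans_lt
      ((Cardinal.mk_union_le _ _).trans_lt (Cardinal.add_lt_of_lt hreg.aleph0_le ?_ ?_))
    · exact mk_iUnion_input_lt hreg hsmall fun i X hX => ih1 i X hX (hinp i X hX)
    · exact mk_iUnion_input_lt hreg hbsmall fun j A hA => ih2 j A hA (hbinp j A hA)
  · rintro xs x X ih ⟨hX⟩
    refine (Cardinal.mk_le_mk_of_subset ?_).trans_lt (ih hX)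
    rintro y ⟨ys, hy⟩
    exact ⟨ys, fun h => hy (QFreshAbs.qAbs_body h)⟩

theorem exists_fresh (hreg : (Cardinal.mk var).IsRegular)
    (Xs : List (QTerm var varsort index bindex opsym)) (hXs : ∀ X ∈ Xs, QGood X)
    (avoid : List var) : ∃ y ∉ avoid, ∀ X ∈ Xs, ∀ ys, QFresh ys y X := by
  have hsmall : Cardinal.mk ({y | y ∈ avoid} ∪ ⋃ X ∈ {X | X ∈ Xs}, qSupp X : Set var)
      < Cardinal.mk var := by
    refine (Cardinal.mk_union_le _ _).trans_lt (Cardinal.add_lt_of_lt hreg.aleph0_le ?_ ?_)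
    · exact avoid.finite_toSet.lt_aleph0.trans_le hreg.aleph0_le
    · refine (Cardinal.card_biUnion_lt_iff_forall_of_isRegular hreg
        (Xs.finite_toSet.lt_aleph0.trans_le hreg.aleph0_le)).2 fun X hX => ?_
      exact (mk_qSupp_lt hreg).1 X (hXs X hX)
  obtain ⟨y, hy⟩ := Cardinal.compl_nonempty_of_mk_lt_mk hsmall
  simp only [Set.mem_compl_iff, Set.mem_union, Set.mem_ofPred_eq, Set.mem_iUnion, not_or,
    not_exists] at hy
  exact ⟨y, hy.1, fun X hX ys => by_contra fun h => hy.2 X hX ⟨ys, h⟩⟩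

theorem alpha_mutual_induction
    {M1 : QTerm var varsort index bindex opsym → QTerm var varsort index bindex opsym → Prop}
    {M2 : QAbs var varsort index bindex opsym → QAbs var varsort index bindex opsym → Prop}
    (hvar : ∀ xs x, M1 (.qVar xs x) (.qVar xs x))
    (hop : ∀ d inp binp inp' binp', (∀ i, inp i = none ↔ inp' i = none) →
      (∀ i X X', inp i = some X → inp' i = some X' → M1 X X') →
      (∀ j, binp j = none ↔ binp' j = none) →
      (∀ j A A', binp j = some A → binp' j = some A' → M2 A A') →
      M1 (.qOp d inp binp) (.qOp d inp' binp'))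
    (habs : ∀ xs x x' X X' y, y ∉ ({x, x'} : Set var) → QFresh xs y X → QFresh xs y X' →
      M1 (qSwap y x xs X) (qSwap y x' xs X') → M2 (.qAbs xs x X) (.qAbs xs x' X')) :
    (∀ X Y, Alpha X Y → M1 X Y) ∧ (∀ A B, AlphaAbs A B → M2 A B) :=
  ⟨fun _ _ h => Alpha.rec (motive_1 := fun X Y _ => M1 X Y) (motive_2 := fun A B _ => M2 A B)
      (hvar _ _) (fun h1 _ h3 _ ih1 ih2 => hop _ _ _ _ _ h1 ih1 h3 ih2)
      (fun hy hf hf' _ ih => habs _ _ _ _ _ _ hy hf hf' ih) h,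
    fun _ _ h => AlphaAbs.rec (motive_1 := fun X Y _ => M1 X Y) (motive_2 := fun A B _ => M2 A B)
      (hvar _ _) (fun h1 _ h3 _ ih1 ih2 => hop _ _ _ _ _ h1 ih1 h3 ih2)
      (fun hy hf hf' _ ih => habs _ _ _ _ _ _ hy hf hf' ih) h⟩

theorem alpha_symm :
    (∀ X Y : QTerm var varsort index bindex opsym, Alpha X Y → Alpha Y X) ∧
    (∀ A B : QAbs var varsort index bindex opsym, AlphaAbs A B → AlphaAbs B A) := by
  apply alpha_mutual_induction
  · intro xs x; exact Alpha.qVar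
  · intro d inp binp inp' binp' h1 ih1 h3 ih2
    exact Alpha.qOp (fun i => (h1 i).symm) (fun i X X' a b => ih1 i X' X b a)
      (fun j => (h3 j).symm) (fun j A A' a b => ih2 j A' A b a)
  · intro xs x x' X X' y hy hf hf' ih
    refine AlphaAbs.qAbs (y := y) ?_ hf' hf ih
    simp only [Set.mem_insert_iff, Set.mem_singleton_iff] at hy ⊢
    tauto

theorem alpha_qSwap (z1 z2 : var) (zs : varsort) :
    (∀ X Y : QTerm var varsort index bindex opsym, Alpha X Y →
      Alpha (qSwap z1 z2 zs X) (qSwap z1 z2 zs Y)) ∧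
    (∀ A B : QAbs var varsort index bindex opsym, AlphaAbs A B →
      AlphaAbs (qSwapAbs z1 z2 zs A) (qSwapAbs z1 z2 zs B)) := by
  apply alpha_mutual_induction
  · intro xs x; exact Alpha.qVar
  · intro d inp binp inp' binp' h1 ih1 h3 ih2
    rw [qSwap_qOp, qSwap_qOp]
    refine Alpha.qOp (by simpa using h1) ?_ (by simpa using h3) ?_
    · intro i Y Y' hY hY'
      obtain ⟨X, hX, rfl⟩ := Option.map_eq_some_iff.1 hY
      obtain ⟨X', hX', rfl⟩ := Option.map_eq_some_iff.1 hY'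
      exact ih1 i X X' hX hX'
    · intro j B B' hB hB'
      obtain ⟨A, hA, rfl⟩ := Option.map_eq_some_iff.1 hB
      obtain ⟨A', hA', rfl⟩ := Option.map_eq_some_iff.1 hB'
      exact ih2 j A A' hA hA'
  · intro xs x x' X X' y hy hf hf' ih
    refine AlphaAbs.qAbs (y := swapVarS var varsort zs xs z1 z2 y) ?_
      (qFresh_qSwap.1 X hf) (qFresh_qSwap.1 X' hf') ?_
    · simp only [Set.mem_insert_iff, Set.mem_singleton_iff, (swapVarS_injective _ _ _ _).eq_iff]
      exact hy
    · rwa [qSwap_qSwap_conj, qSwap_qSwap_conj]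

theorem alpha_qdepth :
    (∀ X Y : QTerm var varsort index bindex opsym, Alpha X Y → qdepth X = qdepth Y) ∧
    (∀ A B : QAbs var varsort index bindex opsym,
      AlphaAbs A B → qdepthAbs A = qdepthAbs B) := by
  apply alpha_mutual_induction
  · intro xs x; rfl
  · intro d inp binp inp' binp' h1 ih1 h3 ih2
    rw [qdepth_qOp, qdepth_qOp]
    congr 2
    · refine iSup_congr fun i => ?_
      rcases hX : inp i with _ | X
      · rw [(h1 i).1 hX]
      · obtain ⟨X', hX'⟩ := exists_eq_some_of_none_iff h1 hX
        rw [hX']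
        exact ih1 i X X' hX hX'
    · refine iSup_congr fun j => ?_
      rcases hA : binp j with _ | A
      · rw [(h3 j).1 hA]
      · obtain ⟨A', hA'⟩ := exists_eq_some_of_none_iff h3 hA
        rw [hA']
        exact ih2 j A A' hA hA'
  · intro xs x x' X X' y _ _ _ ih
    rwa [(qdepth_qSwap y x xs).1, (qdepth_qSwap y x' xs).1] at ih

/-- Abstraction step of the depth induction in `alpha_qSwap_self_of_qFresh`: `ih` is needed at
the body with its binder renamed, which has the depth of `X`. -/
theorem alphaAbs_qSwapAbs_self_of (hreg : (Cardinal.mk var).IsRegular) {z1 z2 : var}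
    {zs xs : varsort} {x : var} {X : QTerm var varsort index bindex opsym}
    (ih : ∀ W : QTerm var varsort index bindex opsym, qdepth W = qdepth X → QGood W →
      QFresh zs z1 W → QFresh zs z2 W → Alpha (qSwap z1 z2 zs W) W)
    (hA : QGoodAbs (.qAbs xs x X)) (h1 : QFreshAbs zs z1 (.qAbs xs x X))
    (h2 : QFreshAbs zs z2 (.qAbs xs x X)) :
    AlphaAbs (qSwapAbs z1 z2 zs (.qAbs xs x X)) (.qAbs xs x X) := by
  rcases hA with ⟨hX⟩
  obtain ⟨y, hy, hfresh⟩ := exists_fresh hreg [qSwap z1 z2 zs X, X]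
    (by simp [hX, (qGood_qSwap z1 z2 zs).1 X hX]) [swapVarS var varsort zs xs z1 z2 x, x, z1, z2]
  simp only [List.mem_cons, List.not_mem_nil, or_false, not_or] at hy
  obtain ⟨hyx₁, hyx, hyz1, hyz2⟩ := hy
  have hyfix : swapVarS var varsort zs xs z1 z2 y = y :=
    swapVarS_of_ne (fun h => hyz1 (Prod.mk.inj h).2) (fun h => hyz2 (Prod.mk.inj h).2)
  rw [qSwapAbs_qAbs]
  refine AlphaAbs.qAbs (y := y) (by simp [hyx₁, hyx]) (hfresh _ (by simp) xs)
    (hfresh X (by simp) xs) ?_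
  rw [← hyfix, qSwap_qSwap_conj, hyfix]
  exact ih _ ((qdepth_qSwap y x xs).1 X) ((qGood_qSwap y x xs).1 X hX)
    (qFresh_qSwap_of_qFreshAbs h1 (Ne.symm hyz1) (hfresh X (by simp) xs))
    (qFresh_qSwap_of_qFreshAbs h2 (Ne.symm hyz2) (hfresh X (by simp) xs))

theorem alpha_qSwap_self_of_qFresh (hreg : (Cardinal.mk var).IsRegular) {z1 z2 : var}
    {zs : varsort} {X : QTerm var varsort index bindex opsym} (hX : QGood X)
    (h1 : QFresh zs z1 X) (h2 : QFresh zs z2 X) : Alpha (qSwap z1 z2 zs X) X := by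
  induction X using qdepth_induction with
  | h X ih =>
  cases X with
  | qVar xs x =>
    rcases h1 with ⟨hne1⟩
    rcases h2 with ⟨hne2⟩
    rw [qSwap_qVar, swapVarS_of_ne (Ne.symm hne1) (Ne.symm hne2)]
    exact Alpha.qVar
  | qOp d inp binp =>
    rcases hX with _ | ⟨hinp, hbinp, _, _⟩
    rcases h1 with _ | ⟨h1inp, h1binp⟩
    rcases h2 with _ | ⟨h2inp, h2binp⟩
    rw [qSwap_qOp]
    refine Alpha.qOp (by simp) ?_ (by simp) ?_
    · intro i Y X hY hX
      obtain ⟨_, hX', rfl⟩ := Option.map_eq_some_iff.1 hY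
      cases hX.symm.trans hX'
      exact ih X (qdepth_lt_of_inp hX) (hinp i X hX) (h1inp i X hX) (h2inp i X hX)
    · intro j B A hB hA
      obtain ⟨_, hA', rfl⟩ := Option.map_eq_some_iff.1 hB
      cases hA.symm.trans hA'
      rcases A with ⟨xs, x, X⟩
      exact alphaAbs_qSwapAbs_self_of hreg
        (fun W hW => ih W (hW.trans_lt (qdepthAbs_lt_of_binp hA)))
        (hbinp j _ hA) (h1binp j _ hA) (h2binp j _ hA)

def AlphaTransitiveAt (W : QTerm var varsort index bindex opsym) : Prop :=
  ∀ Y Z, QGood W → QGood Y → QGood Z → Alpha W Y → Alpha Y Z → Alpha W Z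

/-- Rename the witness `y` of `AlphaAbs` to `z` by the swap `z ∧ y`, which is invisible up to
alpha on the original bodies since both variables are fresh there. -/
theorem alpha_qSwap_of_alphaAbs (hreg : (Cardinal.mk var).IsRegular) {xs : varsort}
    {x x' z : var} {X X' : QTerm var varsort index bindex opsym}
    (htrans : AlphaTransitiveAt (qSwap z x xs X)) (hX : QGood X) (hX' : QGood X')
    (hα : AlphaAbs (.qAbs xs x X) (.qAbs xs x' X')) (hz : z ∉ ({x, x'} : Set var))
    (hzX : QFresh xs z X) (hzX' : QFresh xs z X') :
    Alpha (qSwap z x xs X) (qSwap z x' xs X') := by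
  rcases hα with @⟨_, _, _, _, _, y, hy, hyX, hyX', hsw⟩
  by_cases hzy : z = y
  · subst hzy; exact hsw
  simp only [Set.mem_insert_iff, Set.mem_singleton_iff, not_or] at hz hy
  have hrenamed :
      Alpha (qSwap z x xs (qSwap z y xs X)) (qSwap z x' xs (qSwap z y xs X')) := by
    rw [← qSwap_qSwap_of_ne xs hzy hz.1 hy.1, ← qSwap_qSwap_of_ne xs hzy hz.2 hy.2]
    exact (alpha_qSwap z y xs).1 _ _ hsw
  have hback : Alpha (qSwap z x xs (qSwap z y xs X)) (qSwap z x xs X) :=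
    (alpha_qSwap z x xs).1 _ _ (alpha_qSwap_self_of_qFresh hreg hX hzX hyX)
  have hback' : Alpha (qSwap z x' xs (qSwap z y xs X')) (qSwap z x' xs X') :=
    (alpha_qSwap z x' xs).1 _ _ (alpha_qSwap_self_of_qFresh hreg hX' hzX' hyX')
  have hgood : ∀ v w, ∀ W : QTerm var varsort index bindex opsym, QGood W →
      QGood (qSwap v w xs W) := fun v w => (qGood_qSwap v w xs).1
  refine htrans _ _ (hgood _ _ _ hX) (hgood _ _ _ (hgood _ _ _ hX')) (hgood _ _ _ hX') ?_ hback'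
  exact htrans _ _ (hgood _ _ _ hX) (hgood _ _ _ (hgood _ _ _ hX))
    (hgood _ _ _ (hgood _ _ _ hX')) (alpha_symm.1 _ _ hback) hrenamed

theorem alphaAbs_trans_of (hreg : (Cardinal.mk var).IsRegular) {xs : varsort} {x : var}
    {X : QTerm var varsort index bindex opsym} {B C : QAbs var varsort index bindex opsym}
    (ih : ∀ W : QTerm var varsort index bindex opsym, qdepth W = qdepth X → AlphaTransitiveAt W)
    (hA : QGoodAbs (.qAbs xs x X)) (hB : QGoodAbs B) (hC : QGoodAbs C)
    (hAB : AlphaAbs (.qAbs xs x X) B) (hBC : AlphaAbs B C) : AlphaAbs (.qAbs xs x X) C := by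
  have hdepth := alpha_qdepth.2 _ _ hAB
  rcases hAB with @⟨_, _, x', _, X', y, hy, hyX, hyX', hsw⟩
  rcases hBC with @⟨_, _, x'', _, X'', y', hy', hy'X', hy'X'', hsw'⟩
  rcases hA with ⟨hX⟩
  rcases hB with ⟨hX'⟩
  rcases hC with ⟨hX''⟩
  obtain ⟨z, hz, hfresh⟩ :=
    exists_fresh hreg [X, X', X''] (by simp [hX, hX', hX'']) [x, x', x'']
  simp only [List.mem_cons, List.not_mem_nil, or_false, not_or] at hz
  have h1 := alpha_qSwap_of_alphaAbs hreg (ih _ ((qdepth_qSwap z x xs).1 X)) hX hX'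
    (AlphaAbs.qAbs hy hyX hyX' hsw) (by simp [hz]) (hfresh X (by simp) xs)
    (hfresh X' (by simp) xs)
  have h2 := alpha_qSwap_of_alphaAbs hreg
    (ih _ (((qdepth_qSwap z x' xs).1 X').trans hdepth.symm)) hX' hX''
    (AlphaAbs.qAbs hy' hy'X' hy'X'' hsw') (by simp [hz]) (hfresh X' (by simp) xs)
    (hfresh X'' (by simp) xs)
  refine AlphaAbs.qAbs (by simp [hz]) (hfresh X (by simp) xs) (hfresh X'' (by simp) xs) ?_
  exact ih _ ((qdepth_qSwap z x xs).1 X) _ _ ((qGood_qSwap z x xs).1 X hX)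
    ((qGood_qSwap z x' xs).1 X' hX') ((qGood_qSwap z x'' xs).1 X'' hX'') h1 h2

theorem alpha_trans (hreg : (Cardinal.mk var).IsRegular)
    (X : QTerm var varsort index bindex opsym) : AlphaTransitiveAt X := by
  induction X using qdepth_induction with
  | h X ih =>
  intro Y Z hX hY hZ hXY hYZ
  rcases hXY with _ | @⟨d, inp, binp, inp', binp', hn1, hc1, hbn1, hbc1⟩
  · exact hYZ
  rcases hYZ with _ | @⟨_, _, _, inp'', binp'', hn2, hc2, hbn2, hbc2⟩
  rcases hX with _ | ⟨hXi, hXb, _, _⟩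
  rcases hY with _ | ⟨hYi, hYb, _, _⟩
  rcases hZ with _ | ⟨hZi, hZb, _, _⟩
  refine Alpha.qOp (fun i => (hn1 i).trans (hn2 i)) ?_ (fun j => (hbn1 j).trans (hbn2 j)) ?_
  · intro i X1 Z1 hX1 hZ1
    obtain ⟨Y1, hY1⟩ := exists_eq_some_of_none_iff hn1 hX1
    exact ih X1 (qdepth_lt_of_inp hX1) _ _ (hXi _ _ hX1) (hYi _ _ hY1) (hZi _ _ hZ1)
      (hc1 i _ _ hX1 hY1) (hc2 i _ _ hY1 hZ1)
  · intro j A1 C1 hA1 hC1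
    obtain ⟨B1, hB1⟩ := exists_eq_some_of_none_iff hbn1 hA1
    rcases A1 with ⟨xs, x, X1⟩
    exact alphaAbs_trans_of hreg (fun W hW => ih W (hW.trans_lt (qdepthAbs_lt_of_binp hA1)))
      (hXb _ _ hA1) (hYb _ _ hB1) (hZb _ _ hC1) (hbc1 j _ _ hA1 hB1) (hbc2 j _ _ hB1 hC1)

theorem alphaAbs'_iff_alphaAbs_of (hreg : (Cardinal.mk var).IsRegular) {xs : varsort} {x : var}
    {X : QTerm var varsort index bindex opsym} {B : QAbs var varsort index bindex opsym}
    (ih : ∀ W : QTerm var varsort index bindex opsym, qdepth W = qdepth X →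
      ∀ Y, QGood W → QGood Y → (Alpha' W Y ↔ Alpha W Y))
    (hA : QGoodAbs (.qAbs xs x X)) (hB : QGoodAbs B) :
    AlphaAbs' (.qAbs xs x X) B ↔ AlphaAbs (.qAbs xs x X) B := by
  rcases hA with ⟨hX⟩
  rcases hB with @⟨xs', x', X', hX'⟩
  have hbody : ∀ z, Alpha' (qSwap z x xs X) (qSwap z x' xs X') ↔
      Alpha (qSwap z x xs X) (qSwap z x' xs X') := fun z =>
    ih _ ((qdepth_qSwap z x xs).1 X) _ ((qGood_qSwap z x xs).1 X hX)
      ((qGood_qSwap z x' xs).1 X' hX')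
  constructor
  · rintro ⟨hall⟩
    obtain ⟨z, hz, hfresh⟩ := exists_fresh hreg [X, X'] (by simp [hX, hX']) [x, x']
    have hz' : z ∉ ({x, x'} : Set var) := by simpa using hz
    exact AlphaAbs.qAbs hz' (hfresh X (by simp) xs) (hfresh X' (by simp) xs)
      ((hbody z).1 (hall z hz' (hfresh X (by simp) xs) (hfresh X' (by simp) xs)))
  · intro hα
    obtain rfl : xs' = xs := by cases hα; rfl
    exact AlphaAbs'.qAbs fun z hz hzX hzX' => (hbody z).2
      (alpha_qSwap_of_alphaAbs hreg (alpha_trans hreg _) hX hX' hα hz hzX hzX')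

theorem alpha'_iff_alpha_of_qGood (hreg : (Cardinal.mk var).IsRegular)
    {X Y : QTerm var varsort index bindex opsym} (hX : QGood X) (hY : QGood Y) :
    Alpha' X Y ↔ Alpha X Y := by
  induction X using qdepth_induction generalizing Y with
  | h X ih =>
  constructor
  · rintro (_ | ⟨hn, hc, hbn, hbc⟩)
    · exact Alpha.qVar
    rcases hX with _ | ⟨hXi, hXb, _, _⟩
    rcases hY with _ | ⟨hYi, hYb, _, _⟩
    refine Alpha.qOp hn (fun i X1 Y1 h1 h2 => ?_) hbn (fun j A1 B1 h1 h2 => ?_)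
    · exact (ih X1 (qdepth_lt_of_inp h1) (hXi _ _ h1) (hYi _ _ h2)).1 (hc i _ _ h1 h2)
    · rcases A1 with ⟨xs, x, X1⟩
      exact (alphaAbs'_iff_alphaAbs_of hreg
        (fun W hW _ hW' hY => ih W (hW.trans_lt (qdepthAbs_lt_of_binp h1)) hW' hY)
        (hXb _ _ h1) (hYb _ _ h2)).1 (hbc j _ _ h1 h2)
  · rintro (_ | ⟨hn, hc, hbn, hbc⟩)
    · exact Alpha'.qVar
    rcases hX with _ | ⟨hXi, hXb, _, _⟩
    rcases hY with _ | ⟨hYi, hYb, _, _⟩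
    refine Alpha'.qOp hn (fun i X1 Y1 h1 h2 => ?_) hbn (fun j A1 B1 h1 h2 => ?_)
    · exact (ih X1 (qdepth_lt_of_inp h1) (hXi _ _ h1) (hYi _ _ h2)).2 (hc i _ _ h1 h2)
    · rcases A1 with ⟨xs, x, X1⟩
      exact (alphaAbs'_iff_alphaAbs_of hreg
        (fun W hW _ hW' hY => ih W (hW.trans_lt (qdepthAbs_lt_of_binp h1)) hW' hY)
        (hXb _ _ h1) (hYb _ _ h2)).2 (hbc j _ _ h1 h2)

/-- the forall-fresh variant of alpha-equivalence coincides with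
alpha-equivalence on good quasiterms and good quasiabstractions. -/
theorem alpha'_iff_alpha (hinf : Cardinal.aleph0 ≤ Cardinal.mk var)
    (hreg : (Cardinal.mk var).IsRegular) :
    (∀ X Y : QTerm var varsort index bindex opsym, QGood X → QGood Y → (Alpha' X Y ↔ Alpha X Y)) ∧
    (∀ A B : QAbs var varsort index bindex opsym, QGoodAbs A → QGoodAbs B → (AlphaAbs' A B ↔ AlphaAbs A B)) := by
  refine ⟨fun X Y hX hY => alpha'_iff_alpha_of_qGood hreg hX hY, ?_⟩
  rintro ⟨xs, x, X⟩ B hA hB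
  exact alphaAbs'_iff_alphaAbs_of hreg
    (fun W _ Y hW hY => alpha'_iff_alpha_of_qGood hreg hW hY) hA hB

end Binding
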